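/- arXiv:1311.4450 — 6 statements merged into one kernel-verified Lean document; each statement's English description precedes it below -/
import Mathlib

section
/- (Tournament determines cone type.) Let X be a δ-hyperbolike graph with base vertex x. Let y and y′ be vertices with tournaments F : B_{2δ+1}(y) → ℤ and F′ : B_{2δ+1}(y′) → ℤ. If there is φ ∈ Aut(X) with φ(y) = y′ and F = F′ ∘ φ, then φ maps cone(y) onto cone(y′). -/
open SimpleGraph Filter

namespace CF

variable {V : Type*}

/-- A walk in a graph is a geodesic if its length realizes the graph distance
between its endpoints. -/
def IsGeodesic (G : SimpleGraph V) {u v : V} (p : G.Walk u v) : Prop :=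
  p.length = G.dist u v

/-- `G` is δ-hyperbolic: every geodesic triangle is δ-thin, i.e. each side lies
in the δ-neighborhood of the union of the other two sides. -/
def IsDeltaHyperbolic (G : SimpleGraph V) (δ : ℝ) : Prop :=
  ∀ ⦃a b c : V⦄ (p : G.Walk a b) (q : G.Walk b c) (r : G.Walk a c),
    IsGeodesic G p → IsGeodesic G q → IsGeodesic G r →
      (∀ z ∈ p.support, ∃ w, (w ∈ q.support ∨ w ∈ r.support) ∧ (G.dist z w : ℝ) ≤ δ) ∧
      (∀ z ∈ q.support, ∃ w, (w ∈ p.support ∨ w ∈ r.support) ∧ (G.dist z w : ℝ) ≤ δ) ∧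
      (∀ z ∈ r.support, ∃ w, (w ∈ p.support ∨ w ∈ q.support) ∧ (G.dist z w : ℝ) ≤ δ)

/-- `G` has uniformly finite valence. -/
def UnifFiniteValence (G : SimpleGraph V) : Prop :=
  ∃ D : ℕ, ∀ v : V, (G.neighborSet v).Finite ∧ (G.neighborSet v).ncard ≤ D

/-- The automorphism group of `G` acts transitively on vertices. -/
def VertexTransitive (G : SimpleGraph V) : Prop :=
  ∀ u v : V, ∃ φ : G ≃g G, φ u = v

/-- A δ-hyperbolike graph: connected, of uniformly finite valence, δ-hyperbolic
(with δ ≥ 0), and vertex-transitive. -/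
def Hyperbolike (G : SimpleGraph V) (δ : ℝ) : Prop :=
  G.Connected ∧ UnifFiniteValence G ∧ 0 ≤ δ ∧ IsDeltaHyperbolic G δ ∧ VertexTransitive G

/-- The ball of radius `n` about `x` (as a vertex set). -/
def ball (G : SimpleGraph V) (x : V) (n : ℕ) : Set V := {y | G.dist x y ≤ n}

/-- A formal power series over ℝ is rational if `q·P = p` for polynomials `p`, `q`
with `q(0) ≠ 0`. -/
def IsRationalPS (P : PowerSeries ℝ) : Prop :=
  ∃ p q : Polynomial ℝ, q.coeff 0 ≠ 0 ∧ (q : PowerSeries ℝ) * P = (p : PowerSeries ℝ)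

/-- Two geodesics starting at the same point `T`-synchronously fellow travel:
`d(γ(ℓ−i), γ′(ℓ′−i)) ≤ T` for all `0 ≤ i ≤ min(ℓ,ℓ′)`. -/
def SyncFellowTravel (G : SimpleGraph V) (T : ℝ) {x y z : V}
    (p : G.Walk x y) (q : G.Walk x z) : Prop :=
  ∀ i : ℕ, i ≤ min p.length q.length →
    (G.dist (p.getVert (p.length - i)) (q.getVert (q.length - i)) : ℝ) ≤ T

/-- `z` is a competitor of `y` (with respect to the base point `x`):
`z ∈ B_{2δ+1}(y)`, `d(x,z) ≤ d(x,y)`, and some geodesic from `x` to `z`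
`(2δ+1)`-synchronously fellow travels every geodesic from `x` to `y`. -/
def Competitor (G : SimpleGraph V) (δ : ℝ) (x y z : V) : Prop :=
  (G.dist y z : ℝ) ≤ 2*δ+1 ∧ G.dist x z ≤ G.dist x y ∧
  ∃ p : G.Walk x z, IsGeodesic G p ∧
    ∀ q : G.Walk x y, IsGeodesic G q → SyncFellowTravel G (2*δ+1) p q

/-- `F` is a tournament at `y` (with base point `x`); only the values of `F` on
the ball `B_{2δ+1}(y)` are constrained. -/
def Tournament (G : SimpleGraph V) (δ : ℝ) (x y : V) (F : V → ℤ) : Prop :=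
  (∀ z : V, (G.dist y z : ℝ) ≤ 2*δ+1 →
    (G.dist x z : ℤ) - (G.dist x y : ℤ) ≤ F z ∧ F z ≤ (G.dist y z : ℤ)) ∧
  (∀ z : V, Competitor G δ x y z → (G.dist x z : ℤ) = (G.dist x y : ℤ) + F z)

/-- Tournaments `(y,F)` and `(y',F')` have the same type: some automorphism `φ`
carries `y` to `y'` with `F = F' ∘ φ` (on the ball `B_{2δ+1}(y)`). -/
def SameTournamentType (G : SimpleGraph V) (δ : ℝ) (y y' : V) (F F' : V → ℤ) : Prop :=
  ∃ φ : G ≃g G, φ y = y' ∧ ∀ z : V, (G.dist y z : ℝ) ≤ 2*δ+1 → F z = F' (φ z)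

/-- The cone of `y` with respect to the base point `x`. -/
def cone (G : SimpleGraph V) (x y : V) : Set V :=
  {z | G.dist x z = G.dist x y + G.dist y z}

/-- There is a quasi-isometry from the vertices of `G` (with the path metric) to ℝ. -/
def QuasiIsometricToReal (G : SimpleGraph V) : Prop :=
  ∃ (f : V → ℝ) (C : ℝ), 1 ≤ C ∧
    (∀ u v : V, (G.dist u v : ℝ)/C - C ≤ |f u - f v| ∧ |f u - f v| ≤ C * G.dist u v + C) ∧
    (∀ r : ℝ, ∃ v : V, |r - f v| ≤ C)

/-- `G` is nonelementary: infinitely many vertices and not quasi-isometric to ℝ. -/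
def Nonelementary (G : SimpleGraph V) : Prop :=
  Infinite V ∧ ¬ QuasiIsometricToReal G

/-- `ω` is an opposite series of the power series with (positive) coefficients `a`:
the polynomials `Xₙ(P)(s) = Σ_{k≤n} (a_{n-k}/aₙ) s^k` accumulate coefficientwise at `ω`
along some strictly increasing sequence of indices. -/
def OppositeSeries (a : ℕ → ℝ) (ω : ℕ → ℝ) : Prop :=
  ∃ φ : ℕ → ℕ, StrictMono φ ∧
    ∀ k : ℕ, Tendsto (fun j => a (φ j - k) / a (φ j)) atTop (nhds (ω k))

end CF

/-!
An automorphism `φ` with `φ y = y'` that matches the tournaments could only fail to carry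
`cone(y)` into `cone(y')` at a first vertex `z` along a geodesic from `y`, where the path
through `y'` overshoots `d(x, φ z)` by one or two. In that situation hyperbolicity makes the
vertex at distance `d(x, y') - 1` on a geodesic from `x` to `φ z` a competitor `u` of `y'`,
so `F' u = -1`. Pulling back, `F (φ⁻¹ u) = -1` places `φ⁻¹ u` strictly closer to `x` than `y`
while `d(φ⁻¹ u, z) = d(u, φ z)`, which contradicts `z ∈ cone(y)`. The reverse inclusion is
the same argument for `φ⁻¹`.
-/

namespace CF

section Distance

variable {V W : Type*} {G : SimpleGraph V} {G' : SimpleGraph W}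

lemma edist_hom_apply_le (f : G →g G') (u v : V) : G'.edist (f u) (f v) ≤ G.edist u v := by
  by_cases huv : G.Reachable u v
  · obtain ⟨p, hp⟩ := huv.exists_walk_length_eq_edist
    calc G'.edist (f u) (f v) ≤ (p.map f).length := G'.edist_le _
      _ = G.edist u v := by rw [Walk.length_map, hp]
  · simp [edist_eq_top_of_not_reachable huv]

lemma dist_iso_apply (φ : G ≃g G') (u v : V) : G'.dist (φ u) (φ v) = G.dist u v := by
  have h₁ := edist_hom_apply_le (φ : G →g G') u v
  have h₂ := edist_hom_apply_le (φ.symm : G' →g G) (φ u) (φ v)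
  simp only [RelHom.coeFn_mk, RelIso.coe_fn_toEquiv, RelIso.symm_apply_apply] at h₁ h₂
  rw [SimpleGraph.dist, SimpleGraph.dist, le_antisymm h₁ h₂]

lemma dist_getVert_getVert_le {u v : V} (p : G.Walk u v) {i j : ℕ} (hij : i ≤ j) :
    G.dist (p.getVert i) (p.getVert j) ≤ j - i := by
  have hend : (p.drop i).getVert (j - i) = p.getVert j := by
    rw [Walk.drop_getVert, Nat.add_sub_cancel' hij]
  calc G.dist (p.getVert i) (p.getVert j)
      ≤ (((p.drop i).take (j - i)).copy rfl hend).length := dist_le _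
    _ ≤ j - i := by simp

variable {x y : V} {p : G.Walk x y}

lemma IsGeodesic.dist_getVert_getVert (hp : IsGeodesic G p) {i j : ℕ} (hij : i ≤ j)
    (hj : j ≤ p.length) : G.dist (p.getVert i) (p.getVert j) = j - i := by
  have hp : p.length = G.dist x y := hp
  have hxi := dist_getVert_getVert_le p (Nat.zero_le i)
  have hjy := dist_getVert_getVert_le p hj
  have hij' := dist_getVert_getVert_le p hij
  have t₁ := (p.take i).reachable.dist_triangle_left y
  have t₂ := ((p.drop i).take (j - i)).reachable.dist_triangle_left y
  simp only [Walk.getVert_zero, Walk.getVert_length, Walk.drop_getVert, Nat.add_sub_cancel' hij]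
    at hxi hjy t₁ t₂
  omega

lemma IsGeodesic.dist_start_getVert (hp : IsGeodesic G p) {j : ℕ} (hj : j ≤ p.length) :
    G.dist x (p.getVert j) = j := by
  simpa using hp.dist_getVert_getVert (Nat.zero_le j) hj

lemma IsGeodesic.dist_getVert_end (hp : IsGeodesic G p) {i : ℕ} (hi : i ≤ p.length) :
    G.dist (p.getVert i) y = p.length - i := by
  simpa using hp.dist_getVert_getVert hi le_rfl

end Distance

section Hyperbolic

variable {V : Type*} {G : SimpleGraph V} {x y e : V}

/-- The two cases of the thin-triangle argument below: the vertex `b` that is `δ`-close to `a`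
lies either on the side `q` itself or on the side from `y` to `e`. -/
lemma dist_getVert_succ_le_of_mem_side (hc : G.Connected) {q : G.Walk x y} (hq : IsGeodesic G q)
    {a : V} {j : ℕ} (ha : G.dist x a = j) {k : ℕ} (hk : k ≤ q.length) :
    G.dist a (q.getVert (j + 1)) ≤ 2 * G.dist a (q.getVert k) + 1 := by
  have hxk := hq.dist_start_getVert hk
  have t₁ := hc.dist_triangle (u := x) (v := a) (w := q.getVert k)
  have t₂ := hc.dist_triangle (u := x) (v := q.getVert k) (w := a)
  have t₃ := hc.dist_triangle (u := a) (v := q.getVert k) (w := q.getVert (j + 1))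
  rw [SimpleGraph.dist_comm (u := q.getVert k) (v := a)] at t₂
  rcases le_total k (j + 1) with hkj | hkj
  · have := dist_getVert_getVert_le q hkj
    omega
  · have := dist_getVert_getVert_le q hkj
    rw [SimpleGraph.dist_comm] at this
    omega

lemma dist_getVert_succ_le_of_mem_far_side (hc : G.Connected) {q : G.Walk x y}
    (hq : IsGeodesic G q) {h : G.Walk y e} (hh : IsGeodesic G h)
    (hge : G.dist y e + G.dist x y ≤ G.dist x e + 2) {a : V} {j : ℕ}
    (hae : G.dist a e + j = G.dist x e) (hj : j < q.length) {k : ℕ} (hk : k ≤ h.length) :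
    G.dist a (q.getVert (j + 1)) ≤ 2 * G.dist a (h.getVert k) + 1 := by
  have hq' : q.length = G.dist x y := hq
  have hh' : h.length = G.dist y e := hh
  have hyk := hh.dist_start_getVert hk
  have hke := hh.dist_getVert_end hk
  have hjy := hq.dist_getVert_end (i := j + 1) hj
  have t₁ := hc.dist_triangle (u := a) (v := h.getVert k) (w := e)
  have t₂ := hc.dist_triangle (u := a) (v := h.getVert k) (w := q.getVert (j + 1))
  have t₃ := hc.dist_triangle (u := h.getVert k) (v := y) (w := q.getVert (j + 1))
  rw [SimpleGraph.dist_comm] at hyk hjy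
  omega

lemma dist_le_dist_add_one_of_le_add_two (hc : G.Connected)
    (hge : G.dist y e + G.dist x y ≤ G.dist x e + 2) : G.dist x y ≤ G.dist x e + 1 := by
  have := hc.dist_triangle (u := x) (v := e) (w := y)
  rw [SimpleGraph.dist_comm (u := e)] at this
  omega

lemma IsDeltaHyperbolic.dist_getVert_succ_le {δ : ℝ} (hc : G.Connected)
    (hhyp : IsDeltaHyperbolic G δ) {q : G.Walk x y} (hq : IsGeodesic G q) {g : G.Walk x e}
    (hg : IsGeodesic G g) (hge : G.dist y e + G.dist x y ≤ G.dist x e + 2) {j : ℕ}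
    (hj : j < q.length) : (G.dist (g.getVert j) (q.getVert (j + 1)) : ℝ) ≤ 2 * δ + 1 := by
  have hq' : q.length = G.dist x y := hq
  have hg' : g.length = G.dist x e := hg
  have hjg : j ≤ g.length := by
    have := dist_le_dist_add_one_of_le_add_two hc hge
    omega
  obtain ⟨h, hh⟩ := hc.exists_walk_length_eq_dist y e
  obtain ⟨b, hb, hab⟩ := (hhyp q h g hq hh hg).2.2 _ (g.getVert_mem_support j)
  suffices hle : G.dist (g.getVert j) (q.getVert (j + 1)) ≤ 2 * G.dist (g.getVert j) b + 1 by
    have : (G.dist (g.getVert j) (q.getVert (j + 1)) : ℝ) ≤ 2 * G.dist (g.getVert j) b + 1 := by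
      exact_mod_cast hle
    linarith
  rcases hb with hb | hb
  · obtain ⟨k, rfl, hk⟩ := Walk.mem_support_iff_exists_getVert.mp hb
    exact dist_getVert_succ_le_of_mem_side hc hq (hg.dist_start_getVert hjg) hk
  · obtain ⟨k, rfl, hk⟩ := Walk.mem_support_iff_exists_getVert.mp hb
    have hae := hg.dist_getVert_end hjg
    exact dist_getVert_succ_le_of_mem_far_side hc hq hh hge (by omega) hj hk

lemma competitor_getVert_pred {δ : ℝ} (hc : G.Connected) (hhyp : IsDeltaHyperbolic G δ)
    {g : G.Walk x e} (hg : IsGeodesic G g) (hy : 0 < G.dist x y)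
    (hge : G.dist y e + G.dist x y ≤ G.dist x e + 2) :
    Competitor G δ x y (g.getVert (G.dist x y - 1)) := by
  have hg' : g.length = G.dist x e := hg
  have hmg : G.dist x y - 1 ≤ g.length := by
    have := dist_le_dist_add_one_of_le_add_two hc hge
    omega
  have hxu := hg.dist_start_getVert hmg
  obtain ⟨q, hq⟩ := hc.exists_walk_length_eq_dist x y
  refine ⟨?_, by omega, g.take (G.dist x y - 1), ?_, ?_⟩
  · have hqy : q.getVert (G.dist x y) = y := by rw [← hq, Walk.getVert_length]
    have hfar := hhyp.dist_getVert_succ_le hc hq hg hge (j := G.dist x y - 1) (by omega)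
    rwa [Nat.sub_add_cancel hy, hqy, SimpleGraph.dist_comm] at hfar
  · change _ = _
    rw [Walk.take_length, hxu]
    omega
  · intro q hq i hi
    have hq' : q.length = G.dist x y := hq
    simp only [Walk.take_length, min_eq_left hmg, Walk.take_getVert, hq'] at hi ⊢
    rw [min_eq_right (Nat.sub_le _ _), show G.dist x y - i = G.dist x y - 1 - i + 1 by omega]
    exact hhyp.dist_getVert_succ_le hc hq hg hge (by omega)

end Hyperbolic

section Cone

variable {V : Type*} {G : SimpleGraph V} {δ : ℝ} {x y y' : V} {F F' : V → ℤ}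

lemma mem_cone_of_dist_add_dist_eq (hc : G.Connected) {z w : V} (hz : z ∈ cone G x y)
    (hw : G.dist y w + G.dist w z = G.dist y z) : w ∈ cone G x y := by
  have hz : G.dist x z = G.dist x y + G.dist y z := hz
  have t₁ := hc.dist_triangle (u := x) (v := y) (w := w)
  have t₂ := hc.dist_triangle (u := x) (v := w) (w := z)
  change G.dist x w = G.dist x y + G.dist y w
  omega

lemma Tournament.exists_eq_neg_one (hc : G.Connected) (hhyp : IsDeltaHyperbolic G δ)
    (hF : Tournament G δ x y F) (hy : 0 < G.dist x y) {e : V}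
    (hge : G.dist y e + G.dist x y ≤ G.dist x e + 2) :
    ∃ u, (G.dist y u : ℝ) ≤ 2 * δ + 1 ∧ F u = -1 ∧ G.dist u e + G.dist x y = G.dist x e + 1 := by
  obtain ⟨g, hg : IsGeodesic G g⟩ := hc.exists_walk_length_eq_dist x e
  have hg' : g.length = G.dist x e := hg
  have hmg : G.dist x y - 1 ≤ g.length := by
    have := dist_le_dist_add_one_of_le_add_two hc hge
    omega
  have hcomp := competitor_getVert_pred hc hhyp hg hy hge
  have hxu := hg.dist_start_getVert hmg
  have hue := hg.dist_getVert_end hmg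
  have hFu := hF.2 _ hcomp
  exact ⟨_, hcomp.1, by omega, by omega⟩

lemma map_mem_cone_of_le_add_two (hc : G.Connected) (hhyp : IsDeltaHyperbolic G δ)
    (hF : Tournament G δ x y F) (hF' : Tournament G δ x y' F') (φ : G ≃g G) (hφy : φ y = y')
    (hφF : ∀ z : V, (G.dist y z : ℝ) ≤ 2 * δ + 1 → F z = F' (φ z)) {z : V}
    (hz : z ∈ cone G x y) (hge : G.dist y' (φ z) + G.dist x y' ≤ G.dist x (φ z) + 2) :
    φ z ∈ cone G x y' := by
  have hz : G.dist x z = G.dist x y + G.dist y z := hz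
  change G.dist x (φ z) = G.dist x y' + G.dist y' (φ z)
  have hyz : G.dist y' (φ z) = G.dist y z := by rw [← hφy, dist_iso_apply]
  have t₁ := hc.dist_triangle (u := x) (v := y') (w := φ z)
  rcases Nat.eq_zero_or_pos (G.dist x y') with hy' | hy'
  · simp [hc.dist_eq_zero_iff.mp hy']
  obtain ⟨u, hyu, hFu, hue⟩ := hF'.exists_eq_neg_one hc hhyp hy' hge
  have hyv : G.dist y (φ.symm u) = G.dist y' u := by
    rw [← hφy, ← dist_iso_apply φ, RelIso.apply_symm_apply]
  have hvz : G.dist (φ.symm u) z = G.dist u (φ z) := by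
    rw [← dist_iso_apply φ, RelIso.apply_symm_apply]
  have hFv : F (φ.symm u) = -1 := by
    rw [hφF _ (hyv ▸ hyu), RelIso.apply_symm_apply, hFu]
  have hxv := (hF.1 _ (hyv ▸ hyu)).1
  have t₂ := hc.dist_triangle (u := x) (v := φ.symm u) (w := z)
  omega

lemma cone_mapsTo (hc : G.Connected) (hhyp : IsDeltaHyperbolic G δ)
    (hF : Tournament G δ x y F) (hF' : Tournament G δ x y' F') (φ : G ≃g G) (hφy : φ y = y')
    (hφF : ∀ z : V, (G.dist y z : ℝ) ≤ 2 * δ + 1 → F z = F' (φ z)) :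
    Set.MapsTo φ (cone G x y) (cone G x y') := by
  intro z hz
  obtain ⟨r, hr : IsGeodesic G r⟩ := hc.exists_walk_length_eq_dist y z
  suffices key : ∀ i ≤ r.length, φ (r.getVert i) ∈ cone G x y' by
    simpa using key r.length le_rfl
  intro i hi
  induction i with
  | zero => simp [cone, hφy]
  | succ i ih =>
    have hyi := hr.dist_start_getVert hi
    have hr_cone : r.getVert (i + 1) ∈ cone G x y := by
      refine mem_cone_of_dist_add_dist_eq hc hz ?_
      rw [hyi, hr.dist_getVert_end hi, ← (hr : r.length = G.dist y z)]
      omega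
    refine map_mem_cone_of_le_add_two hc hhyp hF hF' φ hφy hφF hr_cone ?_
    have hprev : G.dist x (φ (r.getVert i)) = G.dist x y' + G.dist y' (φ (r.getVert i)) :=
      ih (by omega)
    have hy'i : G.dist y' (φ (r.getVert i)) = i := by
      rw [← hφy, dist_iso_apply, hr.dist_start_getVert (by omega)]
    have hy'i' : G.dist y' (φ (r.getVert (i + 1))) = i + 1 := by
      rw [← hφy, dist_iso_apply, hyi]
    have hstep : G.dist (φ (r.getVert (i + 1))) (φ (r.getVert i)) ≤ 1 := by
      rw [dist_iso_apply, SimpleGraph.dist_comm]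
      simpa using dist_getVert_getVert_le r (Nat.le_add_right i 1)
    have t := hc.dist_triangle (u := x) (v := φ (r.getVert (i + 1))) (w := φ (r.getVert i))
    omega

end Cone

/-- Tournament determines cone type: if `F`, `F'` are tournaments at
`y`, `y'` and `φ ∈ Aut(X)` satisfies `φ(y) = y'` and `F = F' ∘ φ`, then `φ` maps
`cone(y)` onto `cone(y')`. -/
theorem tournament_determines_cone_type {V : Type*} (G : SimpleGraph V) (δ : ℝ)
    (hG : Hyperbolike G δ) (x y y' : V) (F F' : V → ℤ)
    (hF : Tournament G δ x y F) (hF' : Tournament G δ x y' F')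
    (φ : G ≃g G) (hφy : φ y = y')
    (hφF : ∀ z : V, (G.dist y z : ℝ) ≤ 2*δ+1 → F z = F' (φ z)) :
    (fun z : V => φ z) '' cone G x y = cone G x y' := by
  obtain ⟨hc, -, -, hhyp, -⟩ := hG
  have hφy' : φ.symm y' = y := by rw [← hφy, RelIso.symm_apply_apply]
  have hφF' : ∀ z : V, (G.dist y' z : ℝ) ≤ 2 * δ + 1 → F' z = F (φ.symm z) := by
    intro z hz
    rw [← hφy, ← dist_iso_apply φ.symm, RelIso.symm_apply_apply] at hz
    rw [hφF _ hz, RelIso.apply_symm_apply]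
  refine (cone_mapsTo hc hhyp hF hF' φ hφy hφF).image_subset.antisymm fun z hz => ?_
  exact ⟨φ.symm z, cone_mapsTo hc hhyp hF' hF φ.symm hφy' hφF' hz, φ.apply_symm_apply z⟩

end CF
end

section
/- Let X be a δ-hyperbolike graph with base vertex x, let F : B_{2δ+1}(y) → ℤ be a tournament at a vertex y, and let y′ be a child of y (i.e. d(y,y′) = 1 and d(x,y′) = d(x,y) + 1). Then the function F′ : B_{2δ+1}(y′) → ℤ defined by F′(z′) = min { F(z) + d(z,z′) − 1 : z ∈ B_{2δ+1}(y) } is a tournament at y′. -/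
open SimpleGraph Filter

namespace CF

private lemma getVert_concat_of_le {V : Type*} {G : SimpleGraph V} {u v w : V}
    (q : G.Walk u v) (h : G.Adj v w) {j : ℕ} (hj : j ≤ q.length) :
    (q.concat h).getVert j = q.getVert j := by
  rw [SimpleGraph.Walk.concat_eq_append, SimpleGraph.Walk.getVert_append]
  rcases lt_or_eq_of_le hj with h' | h'
  · simp [h']
  · subst h'
    simp [SimpleGraph.Walk.getVert_length]

private lemma concat_isGeodesic {V : Type*} {G : SimpleGraph V} {x y y' : V}
    (hyy' : G.Adj y y') (hxy' : G.dist x y' = G.dist x y + 1)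
    (r : G.Walk x y) (hr : IsGeodesic G r) : IsGeodesic G (r.concat hyy') := by
  unfold IsGeodesic at hr ⊢
  rw [SimpleGraph.Walk.length_concat, hr, hxy']

/-- if `F` is a tournament at `y` and `y'` is a child of `y`, then
`F'(z') = min { F(z) + d(z,z') − 1 : z ∈ B_{2δ+1}(y) }` is a tournament at `y'`. -/
theorem tournament_of_child {V : Type*} (G : SimpleGraph V) (δ : ℝ)
    (hG : Hyperbolike G δ) (x y y' : V) (F : V → ℤ) (hF : Tournament G δ x y F)
    (hchild : G.dist y y' = 1 ∧ G.dist x y' = G.dist x y + 1) :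
    Tournament G δ x y' (fun z' =>
      sInf {m : ℤ | ∃ z : V, (G.dist y z : ℝ) ≤ 2*δ+1 ∧
        m = F z + (G.dist z z' : ℤ) - 1}) := by
  obtain ⟨hconn, -, hδ, -, -⟩ := hG
  obtain ⟨hyy', hxy'⟩ := hchild
  have hadjyy' : G.Adj y y' := SimpleGraph.dist_eq_one_iff_adj.mp hyy'
  -- `F y = 0`
  have hFy : F y = 0 := by
    have h0 : (G.dist y y : ℝ) ≤ 2*δ+1 := by
      rw [SimpleGraph.dist_self]; push_cast; linarith
    have := hF.1 y h0
    rw [SimpleGraph.dist_self] at this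
    omega
  -- lower bound for every member of the defining set
  have lb : ∀ z' : V, ∀ m ∈ {m : ℤ | ∃ z : V, (G.dist y z : ℝ) ≤ 2*δ+1 ∧
      m = F z + (G.dist z z' : ℤ) - 1},
      (G.dist x z' : ℤ) - (G.dist x y' : ℤ) ≤ m := by
    intro z' m hm
    obtain ⟨z, hz, rfl⟩ := hm
    have h1 : (G.dist x z : ℤ) - (G.dist x y : ℤ) ≤ F z := (hF.1 z hz).1
    have h2 : G.dist x z' ≤ G.dist x z + G.dist z z' := hconn.dist_triangle
    omega
  have hbdd : ∀ z' : V, BddBelow {m : ℤ | ∃ z : V, (G.dist y z : ℝ) ≤ 2*δ+1 ∧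
      m = F z + (G.dist z z' : ℤ) - 1} :=
    fun z' => ⟨(G.dist x z' : ℤ) - (G.dist x y' : ℤ), fun m hm => lb z' m hm⟩
  have hne : ∀ z' : V, ({m : ℤ | ∃ z : V, (G.dist y z : ℝ) ≤ 2*δ+1 ∧
      m = F z + (G.dist z z' : ℤ) - 1}).Nonempty := by
    intro z'
    refine ⟨F y + (G.dist y z' : ℤ) - 1, y, ?_, rfl⟩
    rw [SimpleGraph.dist_self]; push_cast; linarith
  constructor
  · -- condition (1)
    intro z' hz'
    dsimp only
    constructor
    · exact le_csInf (hne z') (lb z')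
    · refine le_trans (csInf_le (hbdd z') ⟨y, ?_, rfl⟩) ?_
      · rw [SimpleGraph.dist_self]; push_cast; linarith
      · have h2 : G.dist y z' ≤ G.dist y y' + G.dist y' z' := hconn.dist_triangle
        omega
  · -- condition (2)
    intro z' hz'comp
    dsimp only
    obtain ⟨hz'ball, hz'le, p, hp, hsync⟩ := hz'comp
    have key : ((G.dist x z' : ℤ) - (G.dist x y' : ℤ)) ∈
        {m : ℤ | ∃ z : V, (G.dist y z : ℝ) ≤ 2*δ+1 ∧
          m = F z + (G.dist z z' : ℤ) - 1} := by
      by_cases hd0 : G.dist x z' = 0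
      · -- then `z' = x`, and `x` is a competitor of `y`
        have hxz' : x = z' := hconn.dist_eq_zero_iff.mp hd0
        subst hxz'
        have hdyx : G.dist y x + 1 = G.dist y' x := by
          rw [SimpleGraph.dist_comm, SimpleGraph.dist_comm (u := y')]
          exact hxy'.symm
        have hdyxR : (G.dist y x : ℝ) ≤ 2*δ+1 := by
          have : (G.dist y x : ℝ) + 1 = (G.dist y' x : ℝ) := by exact_mod_cast hdyx
          linarith
        have hcomp : Competitor G δ x y x := by
          refine ⟨hdyxR, by simp [SimpleGraph.dist_self], (SimpleGraph.Walk.nil : G.Walk x x),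
            by simp [IsGeodesic, SimpleGraph.dist_self], ?_⟩
          intro q hq i hi
          simp only [SimpleGraph.Walk.length_nil, Nat.le_min, Nat.le_zero] at hi
          obtain ⟨rfl, -⟩ := hi
          simp only [Nat.sub_zero, SimpleGraph.Walk.getVert_length]
          show (G.dist ((SimpleGraph.Walk.nil : G.Walk x x).getVert 0) y : ℝ) ≤ 2*δ+1
          rw [SimpleGraph.Walk.getVert_zero, SimpleGraph.dist_comm]
          have : (G.dist y x : ℝ) + 1 = (G.dist y' x : ℝ) := by exact_mod_cast hdyx
          have : (G.dist y' x : ℝ) ≤ 2*δ+1 := hz'ball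
          linarith
        have hFx := hF.2 x hcomp
        rw [SimpleGraph.dist_self] at hFx
        refine ⟨x, hdyxR, ?_⟩
        simp only [hd0, SimpleGraph.dist_self, Nat.cast_zero] at hFx ⊢
        omega
      · -- then the penultimate vertex `z` on `p` is a competitor of `y`
        have hplen : p.length = G.dist x z' := hp
        have hpnil : ¬ p.Nil := by
          rw [SimpleGraph.Walk.not_nil_iff_lt_length]; omega
        have hrevnil : ¬ p.reverse.Nil := by
          rw [SimpleGraph.Walk.not_nil_iff_lt_length, SimpleGraph.Walk.length_reverse]; omega
        obtain ⟨z, hadj, r, hrev⟩ := SimpleGraph.Walk.not_nil_iff.mp hrevnil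
        have hpe : p = r.reverse.concat hadj.symm := by
          rw [← p.reverse_reverse, hrev, SimpleGraph.Walk.reverse_cons]
          rfl
        set q : G.Walk x z := r.reverse with hqdef
        have hlen : p.length = q.length + 1 := by
          rw [hpe, SimpleGraph.Walk.length_concat]
        have hdzz' : G.dist z z' = 1 := SimpleGraph.dist_eq_one_iff_adj.mpr hadj.symm
        have hdxz : G.dist x z = q.length := by
          have h1 : G.dist x z ≤ q.length := SimpleGraph.dist_le q
          have h2 : G.dist x z' ≤ G.dist x z + G.dist z z' := hconn.dist_triangle
          omega
        have hq : IsGeodesic G q := hdxz.symm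
        have hdxzval : G.dist x z + 1 = G.dist x z' := by omega
        -- `p.getVert (p.length - (i+1)) = q.getVert (q.length - i)` for `i ≤ q.length`
        have hgv : ∀ i : ℕ, i ≤ q.length →
            p.getVert (p.length - (i+1)) = q.getVert (q.length - i) := by
          intro i hi
          have : p.length - (i+1) = q.length - i := by omega
          rw [this, hpe]
          exact getVert_concat_of_le q hadj.symm (Nat.sub_le _ _)
        -- the same for extended geodesics to `y'`
        have hgv' : ∀ (s : G.Walk x y) (i : ℕ), i ≤ s.length →
            (s.concat hadjyy').getVert ((s.concat hadjyy').length - (i+1)) =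
              s.getVert (s.length - i) := by
          intro s i hi
          have hl : (s.concat hadjyy').length = s.length + 1 := SimpleGraph.Walk.length_concat _ _
          have : (s.concat hadjyy').length - (i+1) = s.length - i := by omega
          rw [this]
          exact getVert_concat_of_le s hadjyy' (Nat.sub_le _ _)
        -- `d(y,z) ≤ 2δ+1`
        have hdyz : (G.dist y z : ℝ) ≤ 2*δ+1 := by
          obtain ⟨s, hs⟩ := hconn.exists_walk_length_eq_dist x y
          have hs' : IsGeodesic G s := hs
          have hsgeo : IsGeodesic G (s.concat hadjyy') := concat_isGeodesic hadjyy' hxy' s hs'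
          have hslen : (s.concat hadjyy').length = s.length + 1 :=
            SimpleGraph.Walk.length_concat _ _
          have h1 := hsync (s.concat hadjyy') hsgeo 1 (by
            rw [hslen]; omega)
          have e1 : p.getVert (p.length - 1) = z := by
            have := hgv 0 (Nat.zero_le _)
            simpa [SimpleGraph.Walk.getVert_length] using this
          have e2 : (s.concat hadjyy').getVert ((s.concat hadjyy').length - 1) = y := by
            have := hgv' s 0 (Nat.zero_le _)
            simpa [SimpleGraph.Walk.getVert_length] using this
          rw [e1, e2] at h1
          rwa [SimpleGraph.dist_comm]
        -- `z` is a competitor of `y`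
        have hcomp : Competitor G δ x y z := by
          refine ⟨hdyz, by omega, q, hq, ?_⟩
          intro s hs i hi
          have hsgeo : IsGeodesic G (s.concat hadjyy') := concat_isGeodesic hadjyy' hxy' s hs
          have hslen : (s.concat hadjyy').length = s.length + 1 :=
            SimpleGraph.Walk.length_concat _ _
          rw [Nat.le_min] at hi
          have h1 := hsync (s.concat hadjyy') hsgeo (i+1) (by
            rw [Nat.le_min, hslen, hlen]; omega)
          rwa [hgv i hi.1, hgv' s i hi.2] at h1
        have hFz := hF.2 z hcomp
        exact ⟨z, hdyz, by omega⟩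
    have h1 := csInf_le (hbdd z') key
    have h2 := le_csInf (hne z') (lb z')
    omega


end CF
end

section
/- Let X be a δ-hyperbolike graph with base vertex x and δ ≥ 1/2, and let y′ be a vertex. If y₁ and y₂ are both parents of y′, then y₁ is a competitor of y₂: that is, y₁ ∈ B_{2δ+1}(y₂), d(x,y₁) ≤ d(x,y₂), and some geodesic from x to y₁ (2δ+1)-synchronously fellow travels every geodesic from x to y₂. -/
open SimpleGraph Filter

namespace CF

private lemma aux_getVert_append_of_le {V : Type*} {G : SimpleGraph V} {u v w : V}
    (p : G.Walk u v) (q : G.Walk v w) {k : ℕ} (hk : k ≤ p.length) :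
    (p.append q).getVert k = p.getVert k := by
  rw [Walk.getVert_append]
  rcases lt_or_eq_of_le hk with h | h
  · simp [h]
  · subst h
    simp [Walk.getVert_length, Walk.getVert_zero]

private lemma aux_dist_getVert_le {V : Type*} {G : SimpleGraph V} (hc : G.Connected)
    {u v : V} (p : G.Walk u v) (i j : ℕ) (hij : i ≤ j) :
    G.dist (p.getVert i) (p.getVert j) ≤ j - i := by
  induction p generalizing i j with
  | nil => simp [Walk.getVert, SimpleGraph.dist_self]
  | @cons a b c h q ih =>
    match i, j with
    | 0, 0 => simp
    | 0, j + 1 =>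
      have h1 : G.dist a b ≤ 1 := by
        simpa using SimpleGraph.dist_le (Walk.cons h Walk.nil)
      have h2 : G.dist b (q.getVert j) ≤ j := by
        simpa [Walk.getVert_zero] using ih 0 j (Nat.zero_le _)
      have h3 : G.dist a (q.getVert j) ≤ G.dist a b + G.dist b (q.getVert j) :=
        hc.dist_triangle
      simp only [Walk.getVert_cons_succ, Walk.getVert_zero]
      omega
    | i + 1, j + 1 =>
      have := ih i j (by omega)
      simpa [Walk.getVert_cons_succ] using this

private lemma aux_geodesic_getVert {V : Type*} {G : SimpleGraph V} (hc : G.Connected)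
    {x y : V} (p : G.Walk x y) (hp : p.length = G.dist x y) {i : ℕ} (hi : i ≤ p.length) :
    G.dist x (p.getVert i) = i ∧ G.dist (p.getVert i) y = p.length - i := by
  have h1 : G.dist x (p.getVert i) ≤ i := by
    simpa [Walk.getVert_zero] using aux_dist_getVert_le hc p 0 i (Nat.zero_le _)
  have h2 : G.dist (p.getVert i) y ≤ p.length - i := by
    simpa [Walk.getVert_length] using aux_dist_getVert_le hc p i p.length hi
  have h3 : G.dist x y ≤ G.dist x (p.getVert i) + G.dist (p.getVert i) y :=
    hc.dist_triangle
  omega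

/-- any two parents `y₁`, `y₂` of a vertex `y'` are competitors of
each other (here: `y₁` is a competitor of `y₂`), for `δ ≥ 1/2`. -/
theorem parents_are_competitors {V : Type*} (G : SimpleGraph V) (δ : ℝ)
    (hδ : (1:ℝ)/2 ≤ δ) (hG : Hyperbolike G δ) (x y' y₁ y₂ : V)
    (h1 : G.dist y₁ y' = 1 ∧ G.dist x y' = G.dist x y₁ + 1)
    (h2 : G.dist y₂ y' = 1 ∧ G.dist x y' = G.dist x y₂ + 1) :
    Competitor G δ x y₂ y₁ := by
  obtain ⟨hc, _, hδ0, hyp, _⟩ := hG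
  set n := G.dist x y₁ with hn
  have hxy2 : G.dist x y₂ = n := by omega
  have a1 : G.Adj y₁ y' := (SimpleGraph.dist_eq_one_iff_adj).mp h1.1
  have a2 : G.Adj y₂ y' := (SimpleGraph.dist_eq_one_iff_adj).mp h2.1
  -- part 1 : d(y₂,y₁) ≤ 2δ+1
  have hd21 : G.dist y₂ y₁ ≤ 2 := by
    have t := hc.dist_triangle (u := y₂) (v := y') (w := y₁)
    have : G.dist y' y₁ = 1 := by rw [SimpleGraph.dist_comm]; exact h1.1
    omega
  have hd21' : (G.dist y₂ y₁ : ℝ) ≤ 2 := by exact_mod_cast hd21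
  refine ⟨by linarith, by omega, ?_⟩
  -- the geodesic p
  obtain ⟨p, hp⟩ := (hc.preconnected x y₁).exists_walk_length_eq_dist
  refine ⟨p, hp, ?_⟩
  intro q hq i hi
  have hq' : q.length = n := by
    have hh : q.length = G.dist x y₂ := hq
    omega
  have hp' : p.length = n := hp
  -- extended geodesics to y'
  have hplen : (p.concat a1).length = n + 1 := by
    simp [Walk.length_concat, hp']
  have hqlen : (q.concat a2).length = n + 1 := by
    simp [Walk.length_concat, hq']
  have hpgeo : IsGeodesic G (p.concat a1) := by
    show (p.concat a1).length = G.dist x y'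
    rw [hplen, h1.2]
  have hqgeo : IsGeodesic G (q.concat a2) := by
    show (q.concat a2).length = G.dist x y'
    rw [hqlen, h2.2, hxy2]
  have hqrevgeo : IsGeodesic G (q.concat a2).reverse := by
    show ((q.concat a2).reverse).length = G.dist y' x
    rw [Walk.length_reverse, hqlen, SimpleGraph.dist_comm, h2.2, hxy2]
  have hnilgeo : IsGeodesic G (Walk.nil : G.Walk x x) := by
    simp [IsGeodesic, SimpleGraph.dist_self]
  have thin := (hyp (p.concat a1) (q.concat a2).reverse (Walk.nil : G.Walk x x)
    hpgeo hqrevgeo hnilgeo).1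
  -- the point z on p
  set z := p.getVert (p.length - i) with hz
  have hni : p.length - i = n - i := by rw [hp']
  have hin : n - i ≤ n := Nat.sub_le _ _
  have hdxz : G.dist x z = n - i := by
    have h := (aux_geodesic_getVert hc p hp (Nat.sub_le p.length i)).1
    rw [hz]
    omega
  -- z is on the extended geodesic
  have hzsupp : z ∈ (p.concat a1).support := by
    rw [Walk.mem_support_iff_exists_getVert]
    refine ⟨n - i, ?_, by omega⟩
    rw [Walk.concat_eq_append]
    rw [aux_getVert_append_of_le p _ (by omega : n - i ≤ p.length)]
    rw [hz, hni]
  obtain ⟨w, hw, hzw⟩ := thin z hzsupp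
  -- the target point t on q
  set t := q.getVert (q.length - i) with ht
  have hqni : q.length - i = n - i := by rw [hq']
  have hdxt : G.dist x t = n - i := by
    have h := (aux_geodesic_getVert hc q hq (Nat.sub_le q.length i)).1
    rw [ht]
    omega
  have htq' : (q.concat a2).getVert (n - i) = t := by
    rw [Walk.concat_eq_append]
    rw [aux_getVert_append_of_le q _ (by omega : n - i ≤ q.length)]
    rw [ht, hqni]
  show (G.dist z t : ℝ) ≤ 2 * δ + 1
  rcases hw with hw | hw
  · -- w on the reversed extended q-geodesic
    rw [Walk.support_reverse, List.mem_reverse] at hw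
    rw [Walk.mem_support_iff_exists_getVert] at hw
    obtain ⟨j, hjw, hjle⟩ := hw
    rw [hqlen] at hjle
    have hdxw : G.dist x w = j := by
      have := (aux_geodesic_getVert hc (q.concat a2) hqgeo
        (by omega : j ≤ (q.concat a2).length)).1
      rwa [hjw] at this
    -- |j - (n-i)| ≤ dist z w
    have tri1 : G.dist x w ≤ G.dist x z + G.dist z w := hc.dist_triangle
    have tri2 : G.dist x z ≤ G.dist x w + G.dist w z := hc.dist_triangle
    have hcomm : G.dist w z = G.dist z w := SimpleGraph.dist_comm
    -- dist w t ≤ |j - (n-i)|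
    have hwt : G.dist w t ≤ G.dist z w := by
      rcases le_total j (n - i) with hcase | hcase
      · have := aux_dist_getVert_le hc (q.concat a2) j (n - i) hcase
        rw [hjw, htq'] at this
        omega
      · have := aux_dist_getVert_le hc (q.concat a2) (n - i) j hcase
        rw [hjw, htq'] at this
        have hc2 : G.dist t w = G.dist w t := SimpleGraph.dist_comm
        omega
    have trif : G.dist z t ≤ G.dist z w + G.dist w t := hc.dist_triangle
    have hnat : G.dist z t ≤ 2 * G.dist z w := by omega
    have : (G.dist z t : ℝ) ≤ 2 * (G.dist z w : ℝ) := by exact_mod_cast hnat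
    linarith
  · -- w = x
    simp only [Walk.support_nil, List.mem_singleton] at hw
    rw [hw] at hzw
    have hdzx : G.dist z x = n - i := by rw [SimpleGraph.dist_comm]; exact hdxz
    have trif : G.dist z t ≤ G.dist z x + G.dist x t := hc.dist_triangle
    have hnat : G.dist z t ≤ 2 * (n - i) := by omega
    have h1' : (G.dist z t : ℝ) ≤ 2 * ((n - i : ℕ) : ℝ) := by exact_mod_cast hnat
    have h2' : ((n - i : ℕ) : ℝ) ≤ δ := by rw [← hdzx]; exact hzw
    linarith

end CF
end

section
/- Let X be a δ-hyperbolic graph of uniformly finite valence with base vertex x, and fix R > 2δ. Then there is a constant N (depending only on δ, R and the valence bound of X) such that for every vertex z and every integer n with 0 ≤ n ≤ d(x,z): (i) there is at least one vertex y with d(x,y) = n such that every geodesic from x to z passes within distance R of y (i.e. contains a vertex w with d(w,y) ≤ R); and (ii) the number of such vertices y is at most N. -/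
open SimpleGraph Filter

/-!
Fix a geodesic `p₀` from `x` to `z` and let `c` be its vertex at distance `n` from `x`.
Any other geodesic from `x` to `z` forms with `p₀` a `δ`-thin bigon, so it passes within
`δ < R` of `c`. Conversely, if every geodesic passes within `R` of `y`, where `d(x, y) = n`,
then so does `p₀`, at some vertex `w`; since `w` and `c` lie on the same geodesic from `x`,
`d(c, w) = |d(x, w) - d(x, y)| ≤ d(w, y)`, hence `d(c, y) ≤ 2R`. All such `y` therefore lie
in a ball of radius `2R`, which has at most `(D + 1) ^ ⌈2R⌉` vertices.
-/

namespace SimpleGraph.Walk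

variable {V : Type*} {G : SimpleGraph V}

lemma dist_getVert_getVert_le {u v : V} (p : G.Walk u v) {i j : ℕ} (hij : i ≤ j) :
    G.dist (p.getVert i) (p.getVert j) ≤ j - i := by
  have h := G.dist_le ((p.drop i).take (j - i))
  rw [take_length, drop_getVert, Nat.add_sub_cancel' hij] at h
  exact h.trans (min_le_left _ _)

end SimpleGraph.Walk

namespace CF

universe u

variable {V : Type*} {G : SimpleGraph V}

lemma IsGeodesic.dist_getVert {u v : V} {p : G.Walk u v} (hp : IsGeodesic G p) {i : ℕ}
    (hi : i ≤ p.length) : G.dist u (p.getVert i) = i := by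
  rw [← length_eq_dist_of_subwalk hp (p.isSubwalk_take i), Walk.take_length]
  exact min_eq_left hi

lemma IsGeodesic.dist_getVert_le_two_mul (hconn : G.Connected) {u v w y : V} {p : G.Walk u v}
    (hp : IsGeodesic G p) (hw : w ∈ p.support) :
    G.dist (p.getVert (G.dist u y)) y ≤ 2 * G.dist w y := by
  obtain ⟨k, rfl, hk⟩ := Walk.mem_support_iff_exists_getVert.mp hw
  set n := G.dist u y
  have huw : G.dist u (p.getVert k) = k := hp.dist_getVert hk
  have hcw : G.dist (p.getVert n) (p.getVert k) ≤ G.dist (p.getVert k) y := by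
    have h₁ : G.dist u y ≤ G.dist u (p.getVert k) + G.dist (p.getVert k) y := hconn.dist_triangle
    have h₂ : G.dist u (p.getVert k) ≤ G.dist u y + G.dist y (p.getVert k) := hconn.dist_triangle
    rw [G.dist_comm (u := y)] at h₂
    rcases le_total n k with hnk | hkn
    · have := p.dist_getVert_getVert_le hnk
      omega
    · have := p.dist_getVert_getVert_le hkn
      rw [G.dist_comm] at this
      omega
  calc G.dist (p.getVert n) y ≤ G.dist (p.getVert n) (p.getVert k) + G.dist (p.getVert k) y :=
        hconn.dist_triangle
    _ ≤ 2 * G.dist (p.getVert k) y := by omega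

lemma IsDeltaHyperbolic.exists_mem_support_dist_le {δ : ℝ} (hG : IsDeltaHyperbolic G δ)
    {u v x : V} {p q : G.Walk u v} (hp : IsGeodesic G p) (hq : IsGeodesic G q)
    (hx : x ∈ p.support) : ∃ w ∈ q.support, (G.dist x w : ℝ) ≤ δ := by
  have hnil : IsGeodesic G (Walk.nil : G.Walk v v) := by simp [IsGeodesic]
  obtain ⟨w, hw | hw, hxw⟩ := (hG p Walk.nil q hp hnil hq).1 x hx
  · rw [Walk.support_nil, List.mem_singleton] at hw
    exact ⟨w, hw ▸ q.end_mem_support, hxw⟩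
  · exact ⟨w, hw, hxw⟩

lemma exists_adj_mem_ball_of_mem_ball_succ (hconn : G.Connected) {c y : V} {k : ℕ}
    (hy : y ∈ ball G c (k + 1)) : ∃ u ∈ ball G c k, u = y ∨ G.Adj u y := by
  obtain ⟨p, hp⟩ := hconn.exists_walk_length_eq_dist c y
  by_cases hnil : p.Nil
  · exact ⟨y, by simp [ball, hnil.eq.symm], Or.inl rfl⟩
  refine ⟨p.penultimate, ?_, Or.inr (p.adj_penultimate hnil)⟩
  have := G.dist_le p.dropLast
  simp only [ball, Set.mem_ofPred_eq, Walk.length_dropLast] at hy this ⊢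
  omega

lemma exists_finset_ball_subset_card_le_pow (hconn : G.Connected) {D : ℕ}
    (hD : ∀ v : V, (G.neighborSet v).Finite ∧ (G.neighborSet v).ncard ≤ D) (c : V) (k : ℕ) :
    ∃ s : Finset V, ball G c k ⊆ s ∧ s.card ≤ (D + 1) ^ k := by
  classical
  induction k with
  | zero =>
    refine ⟨{c}, fun y hy => ?_, by simp⟩
    simp_all [ball, hconn.dist_eq_zero_iff]
  | succ k ih =>
    obtain ⟨s, hs, hcard⟩ := ih
    refine ⟨s.biUnion fun u => insert u (hD u).1.toFinset, fun y hy => ?_, ?_⟩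
    · obtain ⟨u, hu, hyu⟩ := exists_adj_mem_ball_of_mem_ball_succ hconn hy
      simp only [Finset.coe_biUnion, Set.mem_iUnion, Finset.mem_coe, Finset.mem_insert,
        Set.Finite.mem_toFinset, mem_neighborSet]
      exact ⟨u, hs hu, hyu.imp Eq.symm id⟩
    · refine (Finset.card_biUnion_le_card_mul _ _ (D + 1) fun u _ => ?_).trans ?_
      · refine (Finset.card_insert_le _ _).trans (Nat.add_le_add_right ?_ 1)
        rw [← Set.ncard_eq_toFinset_card _ (hD u).1]
        exact (hD u).2
      · rw [pow_succ]
        exact Nat.mul_le_mul_right _ hcard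

lemma ncard_le_pow_of_subset_ball (hconn : G.Connected) {D : ℕ}
    (hD : ∀ v : V, (G.neighborSet v).Finite ∧ (G.neighborSet v).ncard ≤ D) {c : V} {k : ℕ}
    {t : Set V} (ht : t ⊆ ball G c k) : t.ncard ≤ (D + 1) ^ k := by
  obtain ⟨s, hs, hcard⟩ := exists_finset_ball_subset_card_le_pow hconn hD c k
  calc t.ncard ≤ (s : Set V).ncard := Set.ncard_le_ncard (ht.trans hs) s.finite_toSet
    _ = s.card := Set.ncard_coe_finset s
    _ ≤ (D + 1) ^ k := hcard

theorem shadows_cover_general {δ R : ℝ} (hR : 2*δ < R) (D : ℕ) :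
    ∃ N : ℕ, ∀ (V : Type u) (G : SimpleGraph V), G.Connected →
      (∀ v : V, (G.neighborSet v).Finite ∧ (G.neighborSet v).ncard ≤ D) →
      IsDeltaHyperbolic G δ →
      ∀ (x z : V) (n : ℕ), n ≤ G.dist x z →
        (∃ y : V, G.dist x y = n ∧ ∀ p : G.Walk x z, IsGeodesic G p →
            ∃ w ∈ p.support, (G.dist w y : ℝ) ≤ R) ∧
        Nat.card {y : V | G.dist x y = n ∧ ∀ p : G.Walk x z, IsGeodesic G p →
            ∃ w ∈ p.support, (G.dist w y : ℝ) ≤ R} ≤ N := by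
  refine ⟨(D + 1) ^ ⌈2 * R⌉₊, fun V G hconn hD hG x z n hn => ?_⟩
  obtain ⟨p₀, hp₀⟩ : ∃ p : G.Walk x z, IsGeodesic G p := hconn.exists_walk_length_eq_dist x z
  set c := p₀.getVert n
  refine ⟨⟨c, hp₀.dist_getVert (hn.trans_eq hp₀.symm), fun p hp => ?_⟩, ?_⟩
  · obtain ⟨w, hw, hcw⟩ := hG.exists_mem_support_dist_le hp₀ hp (p₀.getVert_mem_support n)
    refine ⟨w, hw, ?_⟩
    rw [G.dist_comm]
    linarith [(G.dist c w).cast_nonneg (α := ℝ)]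
  rw [Nat.card_coe_set_eq]
  refine ncard_le_pow_of_subset_ball hconn hD (c := c) fun y ⟨hxy, hy⟩ => ?_
  obtain ⟨w, hw, hwy⟩ := hy p₀ hp₀
  have hcy : ((G.dist c y : ℕ) : ℝ) ≤ 2 * G.dist w y := by
    exact_mod_cast hxy ▸ hp₀.dist_getVert_le_two_mul hconn hw
  exact Nat.cast_le.mp ((hcy.trans (by linarith)).trans (Nat.le_ceil _))

/-- Shadows: in a δ-hyperbolic graph of valence at most `D`, for
`R > 2δ`, there is `N = N(δ,R,D)` such that for any vertices `x`, `z` and any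
`0 ≤ n ≤ d(x,z)` there is at least one, and there are at most `N`, vertices `y`
with `d(x,y) = n` such that every geodesic from `x` to `z` passes within `R` of `y`. -/
theorem shadows_cover {δ R : ℝ} (hδ : 0 ≤ δ) (hR : 2*δ < R) (D : ℕ) :
    ∃ N : ℕ, ∀ (V : Type u) (G : SimpleGraph V), G.Connected →
      (∀ v : V, (G.neighborSet v).Finite ∧ (G.neighborSet v).ncard ≤ D) →
      IsDeltaHyperbolic G δ →
      ∀ (x z : V) (n : ℕ), n ≤ G.dist x z →
        (∃ y : V, G.dist x y = n ∧ ∀ p : G.Walk x z, IsGeodesic G p →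
            ∃ w ∈ p.support, (G.dist w y : ℝ) ≤ R) ∧
        Nat.card {y : V | G.dist x y = n ∧ ∀ p : G.Walk x z, IsGeodesic G p →
            ∃ w ∈ p.support, (G.dist w y : ℝ) ≤ R} ≤ N :=
  shadows_cover_general hR D

end CF
end

section
/- Let (fₙ)_{n≥0} be a sequence of positive reals, and suppose there exist λ > 1, an integer N ≥ 1, and positive reals C₀, …, C_{N−1} such that fₙ = C_{n mod N}λⁿ + o(λⁿ) (i.e. fₙλ^{−n} − C_{n mod N} → 0). Then the opposite-series set Ω(P) of P(t) = Σ fₙtⁿ is finite, with at most N elements: for each residue r mod N, the polynomials Xₙ(P) with n ≡ r (mod N) converge coefficientwise to the power series Σ_{k≥0} (C_{(r−k) mod N}/C_r) λ^{−k} s^k, and Ω(P) is contained in the set of these N series. -/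
open SimpleGraph Filter

/-! Write `f (n - k) / f n` as `(f (n - k) / λ ^ (n - k)) / (f n / λ ^ n) * λ⁻¹ ^ k`: along
indices `n ≡ ρ (mod N)` the two normalized terms tend to `C (ρ - k)` and `C ρ`. By pigeonhole,
every strictly increasing sequence of indices has a subsequence lying in a single residue class,
so each opposite series is one of these `N` limits. -/

open Topology

namespace CF

lemma div_eq_div_pow_sub_div_div_pow_mul_inv_pow {K : Type*} [Field K] {L : K} (hL : L ≠ 0)
    (a b : K) {k n : ℕ} (hk : k ≤ n) : a / b = a / L ^ (n - k) / (b / L ^ n) * L⁻¹ ^ k := by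
  rw [div_div_div_comm, pow_sub₀ L hL hk, mul_div_cancel_left₀ _ (pow_ne_zero n hL),
    div_inv_eq_mul, inv_pow, mul_inv_cancel_right₀ (pow_ne_zero k hL)]

lemma tendsto_comp_of_residue_eq {N : ℕ} {E : Type*} [TopologicalSpace E] [AddGroup E]
    [IsTopologicalAddGroup E] {g : ℕ → E} {c : ZMod N → E}
    (hg : Tendsto (fun n : ℕ => g n - c n) atTop (𝓝 0)) {ψ : ℕ → ℕ}
    (hψ : Tendsto ψ atTop atTop) {ρ : ZMod N} (hρ : ∀ᶠ j in atTop, (ψ j : ZMod N) = ρ) :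
    Tendsto (fun j => g (ψ j)) atTop (𝓝 (c ρ)) := by
  have h := (hg.comp hψ).add_const (c ρ)
  rw [zero_add] at h
  refine h.congr' (hρ.mono fun j hj => ?_)
  simp [hj]

/-- The limit of the opposite polynomials `Xₙ` along the indices `n ≡ ρ (mod N)`. -/
noncomputable def residueOppositeSeries {N : ℕ} (c : ZMod N → ℝ) (lam : ℝ) (ρ : ZMod N)
    (k : ℕ) : ℝ :=
  c (ρ - k) / c ρ * lam⁻¹ ^ k

section

variable {N : ℕ} {f : ℕ → ℝ} {lam : ℝ} {c : ZMod N → ℝ}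

lemma tendsto_ratio_of_residue_eq (hlam : lam ≠ 0)
    (ho : Tendsto (fun n : ℕ => f n / lam ^ n - c n) atTop (𝓝 0)) {ψ : ℕ → ℕ}
    (hψ : Tendsto ψ atTop atTop) {ρ : ZMod N} (hcρ : c ρ ≠ 0)
    (hρ : ∀ᶠ j in atTop, (ψ j : ZMod N) = ρ) (k : ℕ) :
    Tendsto (fun j => f (ψ j - k) / f (ψ j)) atTop (𝓝 (residueOppositeSeries c lam ρ k)) := by
  have hk : ∀ᶠ j in atTop, k ≤ ψ j := hψ.eventually_ge_atTop k
  have hρk : ∀ᶠ j in atTop, ((ψ j - k : ℕ) : ZMod N) = ρ - k := by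
    filter_upwards [hk, hρ] with j hjk hjρ
    rw [Nat.cast_sub hjk, hjρ]
  have hnum := tendsto_comp_of_residue_eq ho ((tendsto_sub_atTop_nat k).comp hψ) hρk
  have hden := tendsto_comp_of_residue_eq ho hψ hρ
  refine ((hnum.div hden hcρ).mul_const (lam⁻¹ ^ k)).congr' ?_
  filter_upwards [hk] with j hjk
  exact (div_eq_div_pow_sub_div_div_pow_mul_inv_pow hlam _ _ hjk).symm

lemma OppositeSeries.exists_eq_residueOppositeSeries [NeZero N] (hlam : lam ≠ 0)
    (hc : ∀ ρ, c ρ ≠ 0) (ho : Tendsto (fun n : ℕ => f n / lam ^ n - c n) atTop (𝓝 0))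
    {ω : ℕ → ℝ} (hω : OppositeSeries f ω) :
    ∃ ρ, ω = residueOppositeSeries c lam ρ := by
  obtain ⟨φ, hφ, hφω⟩ := hω
  obtain ⟨ρ, hρ⟩ : ∃ ρ : ZMod N, ∃ᶠ j in atTop, (φ j : ZMod N) = ρ :=
    frequently_exists.mp (Frequently.of_forall fun j => ⟨_, rfl⟩)
  obtain ⟨θ, hθ, hθρ⟩ := extraction_of_frequently_atTop hρ
  refine ⟨ρ, funext fun k => tendsto_nhds_unique ((hφω k).comp hθ.tendsto_atTop) ?_⟩
  exact tendsto_ratio_of_residue_eq hlam ho (hφ.comp hθ).tendsto_atTop (hc ρ)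
    (Eventually.of_forall hθρ) k

end

theorem opposite_series_of_periodic_asymptotics_general (f : ℕ → ℝ)
    (lam : ℝ) (hlam : 1 < lam) (N : ℕ) (hN : 0 < N)
    (c : ZMod N → ℝ) (hc : ∀ r, 0 < c r)
    (ho : Tendsto (fun n : ℕ => f n / lam^n - c (n : ZMod N)) atTop (nhds 0)) :
    (∀ r : ℕ, r < N → ∀ k : ℕ,
        Tendsto (fun j : ℕ => f (N*j + r - k) / f (N*j + r)) atTop
          (nhds (c ((r : ZMod N) - (k : ZMod N)) / c (r : ZMod N) * lam⁻¹ ^ k))) ∧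
    {ω : ℕ → ℝ | OppositeSeries f ω} ⊆
      {ω : ℕ → ℝ | ∃ r : ℕ, r < N ∧
        ω = fun k : ℕ => c ((r : ZMod N) - (k : ZMod N)) / c (r : ZMod N) * lam⁻¹ ^ k} ∧
    {ω : ℕ → ℝ | OppositeSeries f ω}.Finite ∧
    Nat.card {ω : ℕ → ℝ | OppositeSeries f ω} ≤ N := by
  have : NeZero N := ⟨hN.ne'⟩
  have hlam0 : lam ≠ 0 := (zero_lt_one.trans hlam).ne'
  have hc0 : ∀ ρ, c ρ ≠ 0 := fun ρ => (hc ρ).ne'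
  have hΩ : {ω | OppositeSeries f ω} ⊆ Set.range (residueOppositeSeries c lam) :=
    fun ω hω =>
      (OppositeSeries.exists_eq_residueOppositeSeries hlam0 hc0 ho hω).imp fun _ => Eq.symm
  refine ⟨fun r _ k => ?_, fun ω hω => ?_, (Set.finite_range _).subset hΩ, ?_⟩
  · have hψ : StrictMono fun j => N * j + r := (strictMono_mul_left_of_pos hN).add_const r
    exact tendsto_ratio_of_residue_eq hlam0 ho hψ.tendsto_atTop (hc0 _)
      (ρ := r) (Eventually.of_forall fun j => by simp) k
  · obtain ⟨ρ, rfl⟩ := hΩ hω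
    exact ⟨ρ.val, ρ.val_lt, by rw [ZMod.natCast_zmod_val]; rfl⟩
  · calc Nat.card {ω | OppositeSeries f ω}
        ≤ Nat.card (Set.range (residueOppositeSeries c lam)) :=
          Nat.card_mono (Set.finite_range _) hΩ
      _ ≤ Nat.card (ZMod N) := Finite.card_range_le _
      _ = N := Nat.card_zmod N

/-- if `fₙ = C_{n mod N} λⁿ + o(λⁿ)` with positive `C_r` and `λ > 1`,
then along each residue class `r mod N` the opposite polynomials converge
coefficientwise to `Σ_k (C_{(r−k) mod N}/C_r) λ^{−k} s^k`; hence `Ω(P)` is contained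
in this set of `N` series, is finite, and has at most `N` elements. -/
theorem opposite_series_of_periodic_asymptotics (f : ℕ → ℝ) (hf : ∀ n, 0 < f n)
    (lam : ℝ) (hlam : 1 < lam) (N : ℕ) (hN : 0 < N)
    (c : ZMod N → ℝ) (hc : ∀ r, 0 < c r)
    (ho : Tendsto (fun n : ℕ => f n / lam^n - c (n : ZMod N)) atTop (nhds 0)) :
    (∀ r : ℕ, r < N → ∀ k : ℕ,
        Tendsto (fun j : ℕ => f (N*j + r - k) / f (N*j + r)) atTop
          (nhds (c ((r : ZMod N) - (k : ZMod N)) / c (r : ZMod N) * lam⁻¹ ^ k))) ∧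
    {ω : ℕ → ℝ | OppositeSeries f ω} ⊆
      {ω : ℕ → ℝ | ∃ r : ℕ, r < N ∧
        ω = fun k : ℕ => c ((r : ZMod N) - (k : ZMod N)) / c (r : ZMod N) * lam⁻¹ ^ k} ∧
    {ω : ℕ → ℝ | OppositeSeries f ω}.Finite ∧
    Nat.card {ω : ℕ → ℝ | OppositeSeries f ω} ≤ N :=
  opposite_series_of_periodic_asymptotics_general f lam hlam N hN c hc ho

end CF
end

section
/- Let X be a connected graph in which every vertex has finite degree, and let x be a vertex. Then the group Aut(X,x) of graph automorphisms of X fixing x is either finite or uncountable. -/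
open SimpleGraph Filter

/-!
An automorphism fixing `x` preserves every ball `B_n` around `x`, and these balls are finite.
If for some `n` only the identity fixes `B_n` pointwise, then `Aut(X,x)` embeds into the finite
set of self-maps of `B_n`. Otherwise there are automorphisms `σₖ` and radii `r₀ < r₁ < ⋯` such
that `σₖ` fixes `B_{rₖ}` pointwise but moves a vertex `wₖ ∈ B_{rₖ₊₁}`. For every `ε : ℕ → Bool`
the products `σ₀^ε₀ ⋯ σₖ^εₖ` stabilize on each ball, so they converge to an automorphism fixing
`x`; if `k` is the first index with `εₖ ≠ ε'ₖ`, the two limits differ at `wₖ`.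
-/

namespace SimpleGraph

variable {V W : Type*} {G : SimpleGraph V} {G' : SimpleGraph W}

theorem Hom.edist_map_le (f : G →g G') (u v : V) : G'.edist (f u) (f v) ≤ G.edist u v := by
  by_cases h : G.Reachable u v
  · obtain ⟨p, hp⟩ := h.exists_walk_length_eq_edist
    exact hp ▸ (edist_le (p.map f)).trans_eq (by rw [Walk.length_map])
  · simp [edist_eq_top_of_not_reachable h]

theorem Iso.edist_map (φ : G ≃g G') (u v : V) : G'.edist (φ u) (φ v) = G.edist u v :=
  le_antisymm (Hom.edist_map_le φ.toHom u v) <| by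
    simpa using Hom.edist_map_le φ.symm.toHom (φ u) (φ v)

theorem Iso.dist_map (φ : G ≃g G') (u v : V) : G'.dist (φ u) (φ v) = G.dist u v := by
  simp only [dist, Iso.edist_map]

theorem exists_adj_dist_lt {x y : V} (h : G.dist x y ≠ 0) :
    ∃ z, G.Adj y z ∧ G.dist x z < G.dist x y := by
  rw [dist_comm] at h ⊢
  obtain ⟨p, hp⟩ := exists_walk_of_dist_ne_zero h
  have hnil : ¬ p.Nil := by
    rw [← Walk.length_eq_zero_iff]; omega
  refine ⟨p.snd, p.adj_snd hnil, ?_⟩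
  rw [dist_comm]
  have := Walk.length_tail_add_one hnil
  have := dist_le p.tail
  omega

end SimpleGraph

namespace CF

section

variable {V : Type*} {G : SimpleGraph V} {x : V}

theorem mem_ball {n : ℕ} {v : V} : v ∈ ball G x n ↔ G.dist x v ≤ n := Iff.rfl

theorem ball_subset_ball {m n : ℕ} (h : m ≤ n) : ball G x m ⊆ ball G x n :=
  fun _ hv => le_trans hv h

theorem mem_ball_self (n : ℕ) : x ∈ ball G x n := by
  simp [mem_ball]

theorem ball_finite (hconn : G.Preconnected) (hlf : ∀ v : V, (G.neighborSet v).Finite)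
    (x : V) (n : ℕ) : (ball G x n).Finite := by
  induction n with
  | zero =>
    refine (Set.finite_singleton x).subset fun y (hy : G.dist x y ≤ 0) => ?_
    exact ((hconn x y).dist_eq_zero_iff.mp (Nat.le_zero.mp hy)).symm
  | succ n ih =>
    refine (ih.union (ih.biUnion fun z _ => hlf z)).subset fun y (hy : G.dist x y ≤ n + 1) => ?_
    by_cases hyn : G.dist x y ≤ n
    · exact .inl hyn
    · obtain ⟨z, hyz, hz⟩ := exists_adj_dist_lt (by omega : G.dist x y ≠ 0)
      exact .inr (Set.mem_biUnion (x := z) (by show G.dist x z ≤ n; omega) hyz.symm)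

theorem Iso.apply_mem_ball_iff {φ : G ≃g G} (hφ : φ x = x) {n : ℕ} {v : V} :
    φ v ∈ ball G x n ↔ v ∈ ball G x n := by
  rw [mem_ball, mem_ball, ← hφ, Iso.dist_map, hφ]

theorem finite_stabilizer_of_ball_rigid {n : ℕ} (hfin : (ball G x n).Finite)
    (hrigid : ∀ φ : G ≃g G, (∀ v ∈ ball G x n, φ v = v) → φ = 1) :
    Finite {φ : G ≃g G // φ x = x} := by
  have := hfin.to_subtype
  let restrict (φ : {φ : G ≃g G // φ x = x}) : ball G x n → ball G x n :=
    Set.MapsTo.restrict φ.1 _ _ fun _ => (Iso.apply_mem_ball_iff φ.2).mpr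
  refine Finite.of_injective restrict fun φ ψ h => ?_
  have hagree (v) (hv : v ∈ ball G x n) : φ.1 v = ψ.1 v :=
    congrArg Subtype.val (congrFun h ⟨v, hv⟩)
  refine Subtype.ext (inv_mul_eq_one.mp (hrigid _ fun v hv => ?_)).symm
  rw [RelIso.mul_apply, hagree v hv, RelIso.inv_apply_self]

theorem exists_iso_eqOn_ball (P : ℕ → G ≃g G) (hx : ∀ n, P n x = x)
    (hP : ∀ n m, n ≤ m → ∀ v ∈ ball G x n, P m v = P n v) :
    ∃ L : G ≃g G, ∀ n, ∀ v ∈ ball G x n, L v = P n v := by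
  let f (v : V) : V := P (G.dist x v) v
  have hf (n : ℕ) (v : V) (hv : v ∈ ball G x n) : f v = P n v :=
    (hP _ n hv v (le_refl (G.dist x v))).symm
  have hf_max (u v : V) : f u = P (max (G.dist x u) (G.dist x v)) u ∧
      f v = P (max (G.dist x u) (G.dist x v)) v :=
    ⟨hf _ u (le_max_left (G.dist x u) _), hf _ v (le_max_right (G.dist x u) _)⟩
  have hinj : f.Injective := fun u v huv => by
    rw [(hf_max u v).1, (hf_max u v).2] at huv
    exact (P _).injective huv
  have hsurj : f.Surjective := fun z => by
    refine ⟨(P (G.dist x z))⁻¹ z, ?_⟩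
    have hmem : (P (G.dist x z))⁻¹ z ∈ ball G x (G.dist x z) := by
      rw [← Iso.apply_mem_ball_iff (hx _), RelIso.apply_inv_self]
      exact mem_ball.mpr le_rfl
    rw [hf _ _ hmem, RelIso.apply_inv_self]
  refine ⟨⟨Equiv.ofBijective f ⟨hinj, hsurj⟩, fun {u v} => ?_⟩, hf⟩
  show G.Adj (f u) (f v) ↔ G.Adj u v
  rw [(hf_max u v).1, (hf_max u v).2]
  exact (P _).map_adj_iff

def partialProd (σ : ℕ → G ≃g G) (ε : ℕ → Bool) : ℕ → G ≃g G
  | 0 => 1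
  | k + 1 => partialProd σ ε k * if ε k then σ k else 1

theorem partialProd_succ_apply (σ : ℕ → G ≃g G) (ε : ℕ → Bool) (k : ℕ) (v : V) :
    partialProd σ ε (k + 1) v = partialProd σ ε k ((if ε k then σ k else 1) v) := rfl

theorem partialProd_apply_of_fixed (σ : ℕ → G ≃g G) (ε : ℕ → Bool) {n m : ℕ} {v : V}
    (hv : ∀ j, n ≤ j → σ j v = v) (hnm : n ≤ m) :
    partialProd σ ε m v = partialProd σ ε n v := by
  induction m, hnm using Nat.le_induction with
  | base => rfl
  | succ m hm ih =>
    rw [partialProd_succ_apply, ← ih]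
    cases ε m <;> simp [hv m hm, RelIso.one_apply]

theorem partialProd_congr (σ : ℕ → G ≃g G) {ε ε' : ℕ → Bool} {k : ℕ}
    (h : ∀ j < k, ε j = ε' j) : partialProd σ ε k = partialProd σ ε' k := by
  induction k with
  | zero => rfl
  | succ k ih =>
    simp only [partialProd, h k k.lt_succ_self, ih fun j hj => h j (hj.trans k.lt_succ_self)]

theorem exists_nat_bool_injection_stabilizer (σ : ℕ → G ≃g G) (r : ℕ → ℕ) (w : ℕ → V)
    (hr : StrictMono r) (hσ : ∀ k, ∀ v ∈ ball G x (r k), σ k v = v)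
    (hw : ∀ k, w k ∈ ball G x (r (k + 1))) (hmove : ∀ k, σ k (w k) ≠ w k) :
    ∃ f : (ℕ → Bool) → {φ : G ≃g G // φ x = x}, f.Injective := by
  have hstable (ε : ℕ → Bool) {k m : ℕ} {v : V} (hv : v ∈ ball G x (r k)) (hkm : k ≤ m) :
      partialProd σ ε m v = partialProd σ ε k v :=
    partialProd_apply_of_fixed σ ε
      (fun j hj => hσ j v (ball_subset_ball (hr.monotone hj) hv)) hkm
  have hlim (ε : ℕ → Bool) : ∃ L : G ≃g G, ∀ n, ∀ v ∈ ball G x n, L v = partialProd σ ε n v :=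
    exists_iso_eqOn_ball _ (fun n => hstable ε (mem_ball_self _) n.zero_le)
      (fun n _ hnm v hv => hstable ε (ball_subset_ball (hr.id_le n) hv) hnm)
  choose L hL using hlim
  refine ⟨fun ε => ⟨L ε, hL ε 0 x (mem_ball_self 0)⟩, fun ε ε' h => funext fun k => ?_⟩
  have hLL : L ε = L ε' := congrArg Subtype.val h
  induction k using Nat.strong_induction_on with
  | _ k ih =>
    have hLw : L ε (w k) = L ε' (w k) := by rw [hLL]
    have hk (δ : ℕ → Bool) :
        L δ (w k) = partialProd σ δ k ((if δ k then σ k else 1) (w k)) := by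
      rw [hL δ _ _ (hw k), hstable δ (hw k) (hr.id_le (k + 1))]
      rfl
    rw [hk, hk, partialProd_congr σ ih] at hLw
    have := (partialProd σ ε' k).injective hLw
    revert this
    cases ε k <;> cases ε' k <;> simp [RelIso.one_apply, hmove k, Ne.symm (hmove k)]

theorem exists_moving_sequence
    (hflex : ∀ n, ∃ φ : G ≃g G, (∀ v ∈ ball G x n, φ v = v) ∧ φ ≠ 1) :
    ∃ (σ : ℕ → G ≃g G) (r : ℕ → ℕ) (w : ℕ → V), StrictMono r ∧
      (∀ k, ∀ v ∈ ball G x (r k), σ k v = v) ∧ (∀ k, w k ∈ ball G x (r (k + 1))) ∧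
      ∀ k, σ k (w k) ≠ w k := by
  have hflex' (n : ℕ) : ∃ φ : G ≃g G, ∃ w, (∀ v ∈ ball G x n, φ v = v) ∧ φ w ≠ w := by
    obtain ⟨φ, hfix, hne⟩ := hflex n
    obtain ⟨w, hw⟩ := DFunLike.ne_iff.mp hne
    exact ⟨φ, w, hfix, hw⟩
  choose τ w hτ hw using hflex'
  have hfar (n : ℕ) : n < G.dist x (w n) := not_le.mp fun h => hw n (hτ n _ h)
  let r (k : ℕ) : ℕ := (fun n => G.dist x (w n))^[k] 0
  have hr (k : ℕ) : r (k + 1) = G.dist x (w (r k)) := Function.iterate_succ_apply' _ _ _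
  refine ⟨fun k => τ (r k), r, fun k => w (r k), strictMono_nat_of_lt_succ fun k => ?_,
    fun k => hτ (r k), fun k => mem_ball.mpr (hr k).ge, fun k => hw (r k)⟩
  rw [hr]
  exact hfar (r k)

end

/-- the stabilizer `Aut(X,x)` of a vertex in a connected locally
finite graph is either finite or uncountable. -/
theorem aut_finite_or_uncountable {V : Type*} (G : SimpleGraph V) (hconn : G.Connected)
    (hlf : ∀ v : V, (G.neighborSet v).Finite) (x : V) :
    Finite {φ : G ≃g G // φ x = x} ∨ ¬ Countable {φ : G ≃g G // φ x = x} := by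
  by_cases hrigid : ∃ n, ∀ φ : G ≃g G, (∀ v ∈ ball G x n, φ v = v) → φ = 1
  · obtain ⟨n, hn⟩ := hrigid
    exact .inl (finite_stabilizer_of_ball_rigid (ball_finite hconn.preconnected hlf x n) hn)
  · push Not at hrigid
    obtain ⟨σ, r, w, hr, hσ, hw, hmove⟩ := exists_moving_sequence hrigid
    obtain ⟨f, hf⟩ := exists_nat_bool_injection_stabilizer σ r w hr hσ hw hmove
    have hcantor : ¬ Countable (ℕ → Bool) := by
      rw [← Cardinal.mk_le_aleph0_iff]
      simpa using Cardinal.aleph0_lt_continuum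
    exact .inr fun _ => hcantor hf.countable

end CF
end
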